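/- Let L and L' be 2-dimensional subspaces of ℂ^6 with dim(L ∩ L') = 1. Then dim(L + L') = 3, and for every 4-dimensional subspace W of ℂ^6 with L + L' ⊆ W the following holds. Let x be a nonzero vector spanning L ∩ L', let u ∈ L' be such that L' = span{x, u}, and let w ∈ W ∖ (L + L'). Then for every t ∈ ℂ ∖ {0}, the subspace L'_t := span{u, x + t·w} is 2-dimensional and satisfies L ∩ L'_t = {0} and L + L'_t = W; moreover for t = 0 one has L'_0 = L'. In particular, every 4-dimensional subspace W containing L + L' arises as the constant value of the span L + L'_t along a one-parameter family of 2-dimensional subspaces L'_t degenerating to L' with L ∩ L'_t = {0} for t ≠ 0. -/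
import Mathlib

open Submodule Module

lemma span_pair_eq_range (M : Type*) [AddCommGroup M] [Module ℂ M] (a b : M) :
    Submodule.span ℂ ({a, b} : Set M) = Submodule.span ℂ (Set.range ![a, b]) := by
  have : Set.range ![a, b] = {a, b} := by
    ext y
    constructor
    · rintro ⟨i, rfl⟩
      fin_cases i <;> simp
    · rintro (rfl | rfl)
      exacts [⟨0, rfl⟩, ⟨1, rfl⟩]
  rw [this]

theorem span_map_limit_depends_on_family (L L' : Submodule ℂ (Fin 6 → ℂ))
    (hL : Module.finrank ℂ L = 2) (hL' : Module.finrank ℂ L' = 2)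
    (hmeet : Module.finrank ℂ ↥(L ⊓ L') = 1) :
    Module.finrank ℂ ↥(L ⊔ L') = 3 ∧
    ∀ W : Submodule ℂ (Fin 6 → ℂ), Module.finrank ℂ W = 4 → L ⊔ L' ≤ W →
      ∀ x : Fin 6 → ℂ, x ∈ L ⊓ L' → x ≠ 0 →
        ∀ u ∈ L', L' = Submodule.span ℂ ({x, u} : Set (Fin 6 → ℂ)) →
          ∀ w ∈ W, w ∉ L ⊔ L' →
            (∀ t : ℂ, t ≠ 0 →
              Module.finrank ℂ ↥(Submodule.span ℂ ({u, x + t • w} : Set (Fin 6 → ℂ))) = 2 ∧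
              L ⊓ Submodule.span ℂ ({u, x + t • w} : Set (Fin 6 → ℂ)) = ⊥ ∧
              L ⊔ Submodule.span ℂ ({u, x + t • w} : Set (Fin 6 → ℂ)) = W) ∧
            Submodule.span ℂ ({u, x + (0 : ℂ) • w} : Set (Fin 6 → ℂ)) = L' := by
  have hsum := Submodule.finrank_sup_add_finrank_inf_eq L L'
  have hsup : Module.finrank ℂ ↥(L ⊔ L') = 3 := by omega
  refine ⟨hsup, ?_⟩
  intro W hW hLW x hx hx0 u hu hL'span w hwW hwLL'
  have hxL : x ∈ L := hx.1
  have hxL' : x ∈ L' := hx.2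
  -- L ⊓ L' = span {x}
  have hspanx : Submodule.span ℂ ({x} : Set (Fin 6 → ℂ)) = L ⊓ L' := by
    apply Submodule.eq_of_le_of_finrank_le
    · rw [Submodule.span_le, Set.singleton_subset_iff]; exact hx
    · rw [hmeet, show (Submodule.span ℂ ({x} : Set (Fin 6 → ℂ))) = ℂ ∙ x from rfl,
        finrank_span_singleton hx0]
  -- u ∉ span {x}
  have hune : u ∉ Submodule.span ℂ ({x} : Set (Fin 6 → ℂ)) := by
    intro hmem
    have hle : L' ≤ Submodule.span ℂ ({x} : Set (Fin 6 → ℂ)) := by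
      rw [hL'span, Submodule.span_le]
      rintro y (rfl | rfl)
      · exact Submodule.mem_span_singleton_self _
      · exact hmem
    have := Submodule.finrank_mono (R := ℂ) hle
    rw [hL', show (Submodule.span ℂ ({x} : Set (Fin 6 → ℂ))) = ℂ ∙ x from rfl,
      finrank_span_singleton hx0] at this
    omega
  have hu0 : u ≠ 0 := fun h => hune (h ▸ Submodule.zero_mem _)
  constructor
  · intro t ht
    set v := x + t • w with hv
    -- linear independence of u, v
    have hli : LinearIndependent ℂ ![u, v] := by
      rw [LinearIndependent.pair_iff]
      intro a b hab
      have hb : b = 0 := by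
        by_contra hb
        have hw' : w = (b * t)⁻¹ • ((b * t) • w) := by
          rw [smul_smul, inv_mul_cancel₀ (mul_ne_zero hb ht), one_smul]
        have hmem : (b * t) • w ∈ L ⊔ L' := by
          have : (b * t) • w = -(a • u) - b • x := by
            have := hab
            rw [hv, smul_add, smul_smul] at this
            linear_combination (norm := module) this
          rw [this]
          exact sub_mem (neg_mem (Submodule.mem_sup_right (Submodule.smul_mem _ _ hu)))
            (Submodule.mem_sup_left (Submodule.smul_mem _ _ hxL))
        exact hwLL' (hw' ▸ Submodule.smul_mem _ _ hmem)
      refine ⟨?_, hb⟩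
      rw [hb, zero_smul, add_zero, smul_eq_zero] at hab
      exact hab.resolve_right hu0
    have hrank : Module.finrank ℂ ↥(Submodule.span ℂ ({u, v} : Set (Fin 6 → ℂ))) = 2 := by
      rw [span_pair_eq_range, finrank_span_eq_card hli]
      simp
    -- L ⊓ span {u, v} = ⊥
    have hinf : L ⊓ Submodule.span ℂ ({u, v} : Set (Fin 6 → ℂ)) = ⊥ := by
      rw [eq_bot_iff]
      rintro y hy
      have hyL : y ∈ L := hy.1
      have hyP : y ∈ Submodule.span ℂ ({u, v} : Set (Fin 6 → ℂ)) := hy.2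
      rw [Submodule.mem_span_pair] at hyP
      obtain ⟨a, b, hab⟩ := hyP
      have hb : b = 0 := by
        by_contra hb
        have hw' : w = (b * t)⁻¹ • ((b * t) • w) := by
          rw [smul_smul, inv_mul_cancel₀ (mul_ne_zero hb ht), one_smul]
        have hmem : (b * t) • w ∈ L ⊔ L' := by
          have heq : (b * t) • w = y - a • u - b • x := by
            rw [hv, smul_add, smul_smul] at hab
            linear_combination (norm := module) hab
          rw [heq]
          exact sub_mem (sub_mem (Submodule.mem_sup_left hyL)
            (Submodule.mem_sup_right (Submodule.smul_mem _ _ hu)))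
            (Submodule.mem_sup_left (Submodule.smul_mem _ _ hxL))
        exact hwLL' (hw' ▸ Submodule.smul_mem _ _ hmem)
      rw [hb, zero_smul, add_zero] at hab
      have ha : a = 0 := by
        by_contra ha
        have hyinf : y ∈ L ⊓ L' := ⟨hyL, hab ▸ Submodule.smul_mem _ _ hu⟩
        rw [← hspanx] at hyinf
        have : u = a⁻¹ • y := by rw [← hab, smul_smul, inv_mul_cancel₀ ha, one_smul]
        exact hune (this ▸ Submodule.smul_mem _ _ hyinf)
      rw [ha, zero_smul] at hab
      simp [← hab]
    refine ⟨hrank, hinf, ?_⟩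
    -- L ⊔ span {u, v} = W
    have hle : L ⊔ Submodule.span ℂ ({u, v} : Set (Fin 6 → ℂ)) ≤ W := by
      refine sup_le (le_trans le_sup_left hLW) ?_
      rw [Submodule.span_le]
      rintro y (rfl | rfl)
      · exact hLW (Submodule.mem_sup_right hu)
      · exact Submodule.add_mem _ (hLW (Submodule.mem_sup_left hxL)) (Submodule.smul_mem _ _ hwW)
    apply Submodule.eq_of_le_of_finrank_le hle
    have := Submodule.finrank_sup_add_finrank_inf_eq L
      (Submodule.span ℂ ({u, v} : Set (Fin 6 → ℂ)))
    rw [hinf, hrank, hL] at this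
    simp only [finrank_bot] at this
    omega
  · rw [zero_smul, add_zero, Set.pair_comm]
    exact hL'span.symm
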